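/- For every u ∈ {1,…,U} and all vectors x₁, x₂ ∈ ℂ^{N+1} each of whose N+1 entries lies in conv(𝒳), one has f_u(x₁) − f_u(x₂) ≥ −L_u·‖x₁ − x₂‖₂; that is, f_u is Lipschitz continuous on the set of vectors with entries in conv(𝒳) with Lipschitz constant L_u. -/

import Mathlib

open Complex Finset

noncomputable section

/-- The set of `K`-th roots of unity in `ℂ`. -/
def rootsSet (K : ℕ) : Set ℂ :=
  {z : ℂ | ∃ k : ℕ, k < K ∧ z = Complex.exp ((2 * Real.pi * k / K : ℝ) * Complex.I)}

/-- The convex hull (over `ℝ`) of the `K`-th roots of unity. -/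
def hullSet (K : ℕ) : Set ℂ := convexHull ℝ (rootsSet K)

/-- The relaxed feasible set `A`. -/
def feasA (K N : ℕ) : Set (Fin (N + 1) → ℂ) :=
  {x | x 0 = 1 ∧ ∀ n : Fin (N + 1), n ≠ 0 → x n ∈ hullSet K}

/-- The discrete feasible set `D`. -/
def feasD (K N : ℕ) : Set (Fin (N + 1) → ℂ) :=
  {x | x 0 = 1 ∧ ∀ n : Fin (N + 1), n ≠ 0 → x n ∈ rootsSet K}

/-- The ℓ1 norm of a complex vector. -/
def norm1 {N : ℕ} (x : Fin (N + 1) → ℂ) : ℝ := ∑ n, ‖x n‖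

/-- The ℓ2 norm of a complex vector. -/
def norm2 {N : ℕ} (x : Fin (N + 1) → ℂ) : ℝ := Real.sqrt (∑ n, ‖x n‖ ^ 2)

/-- The (real) quadratic form `x^H C x`. -/
def quadForm {N : ℕ} (C : Matrix (Fin (N + 1)) (Fin (N + 1)) ℂ)
    (x : Fin (N + 1) → ℂ) : ℝ :=
  (dotProduct (star x) (Matrix.mulVec C x)).re

/-- The Frobenius norm of a complex matrix. -/
def frobNorm {N : ℕ} (M : Matrix (Fin (N + 1)) (Fin (N + 1)) ℂ) : ℝ :=
  Real.sqrt (∑ i, ∑ j, ‖M i j‖ ^ 2)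

/-- The SINR-type objective `f_u`. -/
def fObj {N U : ℕ} (C : Fin U → Fin U → Matrix (Fin (N + 1)) (Fin (N + 1)) ℂ)
    (σ : Fin U → ℝ) (u : Fin U) (x : Fin (N + 1) → ℂ) : ℝ :=
  quadForm (C u u) x /
    ((∑ u' ∈ Finset.univ.erase u, quadForm (C u u') x) + σ u ^ 2)

/-- The Lipschitz constant `L_u`. -/
def Lconst {N U : ℕ} (C : Fin U → Fin U → Matrix (Fin (N + 1)) (Fin (N + 1)) ℂ)
    (σ : Fin U → ℝ) (u : Fin U) : ℝ :=
  2 * Real.sqrt ((N : ℝ) + 1) * frobNorm (C u u) / σ u ^ 2 *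
    (1 + ((N : ℝ) + 1) * frobNorm (∑ u' ∈ Finset.univ.erase u, C u u') / σ u ^ 2)

/-- The minimum of the `f_u` over all users. -/
def minObj {N U : ℕ} (C : Fin U → Fin U → Matrix (Fin (N + 1)) (Fin (N + 1)) ℂ)
    (σ : Fin U → ℝ) (x : Fin (N + 1) → ℂ) : ℝ :=
  ⨅ u : Fin U, fObj C σ u x

/-- The penalized objective `f_0`. -/
def f0 {N U : ℕ} (C : Fin U → Fin U → Matrix (Fin (N + 1)) (Fin (N + 1)) ℂ)
    (σ : Fin U → ℝ) (lam : ℝ) (x : Fin (N + 1) → ℂ) : ℝ :=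
  minObj C σ x + lam * norm1 x

/-! The numerator of `f_u` is the quadratic form of `C_uu`, and its denominator is `σ_u²` plus
the quadratic form of `Σ_{u' ≠ u} C_uu'`. Writing `x^H C x - y^H C y = x^H C (x - y) + (x - y)^H C y`
and applying Cauchy–Schwarz entrywise bounds such a difference by `2 √(N+1) ‖C‖_F ‖x - y‖₂` on the
ball of radius `√(N+1)`, which contains the vectors with entries in `conv 𝒳`. Positive
semidefiniteness keeps both denominators `≥ σ_u²`, so `p/D - q/E = (p - q)/D + q (E - D)/(D E)`
gives `|f_u x₁ - f_u x₂| ≤ L_u ‖x₁ - x₂‖₂`. -/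

open Matrix
open scoped ComplexOrder

lemma norm_le_one_of_mem_hullSet {K : ℕ} {z : ℂ} (hz : z ∈ hullSet K) : ‖z‖ ≤ 1 := by
  have hsub : hullSet K ⊆ Metric.closedBall 0 1 := by
    refine convexHull_min ?_ (convex_closedBall 0 1)
    rintro w ⟨k, -, rfl⟩
    rw [Metric.mem_closedBall, dist_zero_right, Complex.norm_exp_ofReal_mul_I]
  simpa using hsub hz

lemma norm2_le_sqrt_of_norm_le_one {N : ℕ} {x : Fin (N + 1) → ℂ} (hx : ∀ n, ‖x n‖ ≤ 1) :
    norm2 x ≤ √((N : ℝ) + 1) := by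
  refine Real.sqrt_le_sqrt ?_
  calc ∑ n, ‖x n‖ ^ 2 ≤ ∑ _n : Fin (N + 1), (1 : ℝ) :=
        sum_le_sum fun n _ => pow_le_one₀ (norm_nonneg _) (hx n)
    _ = (N : ℝ) + 1 := by simp

lemma abs_re_star_dotProduct_mulVec_le {N : ℕ} (M : Matrix (Fin (N + 1)) (Fin (N + 1)) ℂ)
    (v w : Fin (N + 1) → ℂ) :
    |(star v ⬝ᵥ M *ᵥ w).re| ≤ frobNorm M * norm2 v * norm2 w := by
  have hsum : star v ⬝ᵥ M *ᵥ w =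
      ∑ p : Fin (N + 1) × Fin (N + 1), star (v p.1) * M p.1 p.2 * w p.2 := by
    rw [Fintype.sum_prod_type]
    simp [dotProduct, mulVec, mul_sum, mul_assoc]
  have hfrob : frobNorm M = √(∑ p : Fin (N + 1) × Fin (N + 1), ‖M p.1 p.2‖ ^ 2) := by
    rw [Fintype.sum_prod_type]; rfl
  have hvw : norm2 v * norm2 w =
      √(∑ p : Fin (N + 1) × Fin (N + 1), (‖v p.1‖ * ‖w p.2‖) ^ 2) := by
    rw [norm2, norm2, ← Real.sqrt_mul (sum_nonneg fun _ _ => sq_nonneg _), sum_mul_sum,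
      Fintype.sum_prod_type]
    simp only [mul_pow]
  calc |(star v ⬝ᵥ M *ᵥ w).re| ≤ ‖star v ⬝ᵥ M *ᵥ w‖ := Complex.abs_re_le_norm _
    _ ≤ ∑ p : Fin (N + 1) × Fin (N + 1), ‖M p.1 p.2‖ * (‖v p.1‖ * ‖w p.2‖) := by
      rw [hsum]
      refine (norm_sum_le _ _).trans_eq (sum_congr rfl fun p _ => ?_)
      simp only [norm_mul, norm_star]
      ring
    _ ≤ frobNorm M * (norm2 v * norm2 w) := by
      rw [hfrob, hvw]
      exact Real.sum_mul_le_sqrt_mul_sqrt _ _ _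
    _ = frobNorm M * norm2 v * norm2 w := (mul_assoc ..).symm

lemma quadForm_nonneg_of_posSemidef {N : ℕ} {M : Matrix (Fin (N + 1)) (Fin (N + 1)) ℂ}
    (hM : M.PosSemidef) (x : Fin (N + 1) → ℂ) : 0 ≤ quadForm M x :=
  (Complex.nonneg_iff.mp (hM.dotProduct_mulVec_nonneg x)).1

lemma quadForm_sum {N : ℕ} {ι : Type*} (s : Finset ι)
    (M : ι → Matrix (Fin (N + 1)) (Fin (N + 1)) ℂ) (x : Fin (N + 1) → ℂ) :
    quadForm (∑ i ∈ s, M i) x = ∑ i ∈ s, quadForm (M i) x := by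
  simp [quadForm, sum_mulVec, dotProduct_sum, Complex.re_sum]

lemma quadForm_sub_quadForm {N : ℕ} (M : Matrix (Fin (N + 1)) (Fin (N + 1)) ℂ)
    (x y : Fin (N + 1) → ℂ) :
    quadForm M x - quadForm M y =
      (star x ⬝ᵥ M *ᵥ (x - y)).re + (star (x - y) ⬝ᵥ M *ᵥ y).re := by
  simp only [quadForm, ← Complex.sub_re, ← Complex.add_re, mulVec_sub, dotProduct_sub,
    star_sub, sub_dotProduct]
  ring_nf

lemma abs_quadForm_le {N : ℕ} (M : Matrix (Fin (N + 1)) (Fin (N + 1)) ℂ)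
    (x : Fin (N + 1) → ℂ) : |quadForm M x| ≤ frobNorm M * norm2 x ^ 2 :=
  (abs_re_star_dotProduct_mulVec_le M x x).trans_eq (by ring)

lemma abs_quadForm_sub_le {N : ℕ} (M : Matrix (Fin (N + 1)) (Fin (N + 1)) ℂ)
    {x y : Fin (N + 1) → ℂ} {r : ℝ} (hx : norm2 x ≤ r) (hy : norm2 y ≤ r) :
    |quadForm M x - quadForm M y| ≤ 2 * r * frobNorm M * norm2 (x - y) := by
  have hM : 0 ≤ frobNorm M := Real.sqrt_nonneg _
  have hxy : 0 ≤ norm2 (x - y) := Real.sqrt_nonneg _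
  rw [quadForm_sub_quadForm]
  calc _ ≤ |(star x ⬝ᵥ M *ᵥ (x - y)).re| + |(star (x - y) ⬝ᵥ M *ᵥ y).re| := abs_add_le _ _
    _ ≤ frobNorm M * r * norm2 (x - y) + frobNorm M * norm2 (x - y) * r := by
      gcongr
      · exact (abs_re_star_dotProduct_mulVec_le M x (x - y)).trans (by gcongr)
      · exact (abs_re_star_dotProduct_mulVec_le M (x - y) y).trans (by gcongr)
    _ = 2 * r * frobNorm M * norm2 (x - y) := by ring

lemma abs_div_sub_div_le {p q D E s α β γ : ℝ} (hs : 0 < s) (hD : s ≤ D) (hE : s ≤ E)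
    (hpq : |p - q| ≤ α) (hq : |q| ≤ β) (hDE : |D - E| ≤ γ) :
    |p / D - q / E| ≤ α / s + β * γ / s ^ 2 := by
  have hD0 : 0 < D := hs.trans_le hD
  have hE0 : 0 < E := hs.trans_le hE
  have hsplit : p / D - q / E = (p - q) / D + q * (E - D) / (D * E) := by
    field_simp
    ring
  calc |p / D - q / E| ≤ |(p - q) / D| + |q * (E - D) / (D * E)| := hsplit ▸ abs_add_le _ _
    _ = |p - q| / D + |q| * |D - E| / (D * E) := by
      rw [abs_div, abs_div, abs_mul, abs_sub_comm E, abs_of_pos hD0, abs_of_pos (mul_pos hD0 hE0)]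
    _ ≤ α / s + β * γ / s ^ 2 := by
      have hα : 0 ≤ α := (abs_nonneg _).trans hpq
      have hβ : 0 ≤ β := (abs_nonneg _).trans hq
      have hγ : 0 ≤ γ := (abs_nonneg _).trans hDE
      rw [sq]
      gcongr

lemma abs_fObj_sub_le {N U : ℕ} {C : Fin U → Fin U → Matrix (Fin (N + 1)) (Fin (N + 1)) ℂ}
    {σ : Fin U → ℝ} {u : Fin U} (hσ : 0 < σ u) (hC : ∀ u', (C u u').PosSemidef)
    {x₁ x₂ : Fin (N + 1) → ℂ} (hx₁ : norm2 x₁ ≤ √((N : ℝ) + 1))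
    (hx₂ : norm2 x₂ ≤ √((N : ℝ) + 1)) :
    |fObj C σ u x₁ - fObj C σ u x₂| ≤ Lconst C σ u * norm2 (x₁ - x₂) := by
  set S := ∑ u' ∈ univ.erase u, C u u'
  have hden : ∀ x, σ u ^ 2 ≤ ∑ u' ∈ univ.erase u, quadForm (C u u') x + σ u ^ 2 := fun x =>
    le_add_of_nonneg_left (sum_nonneg fun u' _ => quadForm_nonneg_of_posSemidef (hC u') x)
  have hq : |quadForm (C u u) x₂| ≤ frobNorm (C u u) * ((N : ℝ) + 1) := by
    refine (abs_quadForm_le _ _).trans ?_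
    rw [← Real.sq_sqrt (by positivity : (0 : ℝ) ≤ N + 1)]
    gcongr
    · exact Real.sqrt_nonneg _
    · exact Real.sqrt_nonneg _
  have hDE : |(∑ u' ∈ univ.erase u, quadForm (C u u') x₁ + σ u ^ 2) -
      (∑ u' ∈ univ.erase u, quadForm (C u u') x₂ + σ u ^ 2)| ≤
      2 * √((N : ℝ) + 1) * frobNorm S * norm2 (x₁ - x₂) := by
    rw [add_sub_add_right_eq_sub, ← quadForm_sum, ← quadForm_sum]
    exact abs_quadForm_sub_le S hx₁ hx₂
  refine (abs_div_sub_div_le (pow_pos hσ 2) (hden x₁) (hden x₂)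
    (abs_quadForm_sub_le (C u u) hx₁ hx₂) hq hDE).trans_eq ?_
  unfold Lconst
  ring

theorem stmt4_general
    (K N U : ℕ)
    (a : Fin U → Fin U → (Fin (N + 1) → ℂ))
    (C : Fin U → Fin U → Matrix (Fin (N + 1)) (Fin (N + 1)) ℂ)
    (hC : ∀ u u' : Fin U, C u u' = Matrix.vecMulVec (a u u') (star (a u u')))
    (σ : Fin U → ℝ) (hσ : ∀ u, 0 < σ u)
    (u : Fin U) (x₁ x₂ : Fin (N + 1) → ℂ)
    (hx₁ : ∀ n, x₁ n ∈ hullSet K) (hx₂ : ∀ n, x₂ n ∈ hullSet K) :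
    fObj C σ u x₁ - fObj C σ u x₂ ≥ -(Lconst C σ u) * norm2 (x₁ - x₂) := by
  have hnorm2 : ∀ x : Fin (N + 1) → ℂ, (∀ n, x n ∈ hullSet K) → norm2 x ≤ √((N : ℝ) + 1) :=
    fun x hx => norm2_le_sqrt_of_norm_le_one fun n => norm_le_one_of_mem_hullSet (hx n)
  have hpsd : ∀ u', (C u u').PosSemidef := fun u' =>
    hC u u' ▸ posSemidef_vecMulVec_self_star (a u u')
  rw [ge_iff_le, neg_mul]
  exact neg_le_of_abs_le (abs_fObj_sub_le (hσ u) hpsd (hnorm2 x₁ hx₁) (hnorm2 x₂ hx₂))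

theorem stmt4
    (K N U : ℕ) (hK : 2 ≤ K) (hN : 1 ≤ N) (hU : 1 ≤ U)
    (a : Fin U → Fin U → (Fin (N + 1) → ℂ))
    (C : Fin U → Fin U → Matrix (Fin (N + 1)) (Fin (N + 1)) ℂ)
    (hC : ∀ u u' : Fin U, C u u' = Matrix.vecMulVec (a u u') (star (a u u')))
    (σ : Fin U → ℝ) (hσ : ∀ u, 0 < σ u)
    (u : Fin U) (x₁ x₂ : Fin (N + 1) → ℂ)
    (hx₁ : ∀ n, x₁ n ∈ hullSet K) (hx₂ : ∀ n, x₂ n ∈ hullSet K) :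
    fObj C σ u x₁ - fObj C σ u x₂ ≥ -(Lconst C σ u) * norm2 (x₁ - x₂) :=
  stmt4_general K N U a C hC σ hσ u x₁ x₂ hx₁ hx₂
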